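/- Let f_n: {0,1}^{m_n} → {-1,1} with spectral samples S_n, and suppose I(f_n) ≥ c n^ρ for constants c, ρ > 0. Assume that for every γ > 0 there is δ > 0 such that for all n, P(|S_n| < δ E[|S_n|] and S_n ≠ ∅) < γ. Then for every α < ρ and ε_n = n^{-α}, E[f_n(ω)f_n(ω_{ε_n})] - E[f_n(ω)]^2 → 0 as n → ∞. -/

import Mathlib

/-! Expanding in the Walsh basis, the noise operator acts on `walsh S` by the factor `(1 - ε)^|S|`,
so the noise covariance is `∑_{S ≠ ∅} (1 - ε)^|S| f̂(S)^2 = E[(1 - ε)^|S_f|; S_f ≠ ∅]`.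
Split the spectral sample at `|S| = δ I(f)`: the small nonempty sets contribute at most the lower
tail, which tightness makes smaller than `γ` uniformly in `n`; by Parseval the large ones
contribute at most `(1 - ε)^(δ I(f)) ≤ exp(-ε δ I(f)) ≤ exp(-δ c n^(ρ - α))`, which tends to `0`
because `α < ρ`. -/

open Finset

noncomputable def expect {n : ℕ} (f : (Fin n → Bool) → ℝ) : ℝ :=
  (∑ ω : Fin n → Bool, f ω) / 2 ^ n

noncomputable def walsh {n : ℕ} (S : Finset (Fin n)) (ω : Fin n → Bool) : ℝ :=
  ∏ i ∈ S, (if ω i then -1 else 1)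

noncomputable def walshCoeff {n : ℕ} (f : (Fin n → Bool) → ℝ) (S : Finset (Fin n)) : ℝ :=
  expect (fun ω => f ω * walsh S ω)

noncomputable def noiseKernel {n : ℕ} (ε : ℝ) (ω ω' : Fin n → Bool) : ℝ :=
  ∏ i, (if ω i = ω' i then 1 - ε / 2 else ε / 2)

noncomputable def noiseE {n : ℕ} (ε : ℝ) (f g : (Fin n → Bool) → ℝ) : ℝ :=
  (∑ ω : Fin n → Bool, ∑ ω' : Fin n → Bool, noiseKernel ε ω ω' * f ω * g ω') / 2 ^ n

noncomputable def noiseP {n : ℕ} (ε : ℝ) (f : (Fin n → Bool) → ℝ) : ℝ :=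
  (∑ ω : Fin n → Bool, ∑ ω' : Fin n → Bool,
    noiseKernel ε ω ω' * (if f ω = f ω' then 0 else 1)) / 2 ^ n

noncomputable def influence {n : ℕ} (f : (Fin n → Bool) → ℝ) (i : Fin n) : ℝ :=
  expect (fun ω => if f ω = f (Function.update ω i (!ω i)) then 0 else 1)

noncomputable def totalInfluence {n : ℕ} (f : (Fin n → Bool) → ℝ) : ℝ :=
  ∑ i, influence f i

open Filter Topology

lemma one_sub_pow_le_exp_neg_mul {ε t : ℝ} {k : ℕ} (hε0 : 0 ≤ ε) (hε1 : ε ≤ 1) (htk : t ≤ k) :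
    (1 - ε) ^ k ≤ Real.exp (-(ε * t)) :=
  calc (1 - ε) ^ k ≤ Real.exp (-ε) ^ k :=
        pow_le_pow_left₀ (sub_nonneg.2 hε1) (Real.one_sub_le_exp_neg ε) k
    _ = Real.exp (-(ε * k)) := by rw [← Real.exp_nat_mul]; ring_nf
    _ ≤ Real.exp (-(ε * t)) := by gcongr

lemma tendsto_natCast_rpow_neg_mul_atTop {g : ℕ → ℝ} {c ρ α : ℝ} (hc : 0 < c) (hα : α < ρ)
    (hg : ∀ n : ℕ, c * (n : ℝ) ^ ρ ≤ g n) :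
    Tendsto (fun n : ℕ => (n : ℝ) ^ (-α) * g n) atTop atTop := by
  have hlower : Tendsto (fun n : ℕ => c * (n : ℝ) ^ (ρ - α)) atTop atTop :=
    ((tendsto_rpow_atTop (sub_pos.2 hα)).comp tendsto_natCast_atTop_atTop).const_mul_atTop hc
  refine tendsto_atTop_mono' _ ?_ hlower
  filter_upwards [eventually_gt_atTop 0] with n hn
  have hn' : (0 : ℝ) < n := Nat.cast_pos.2 hn
  calc c * (n : ℝ) ^ (ρ - α) = (n : ℝ) ^ (-α) * (c * (n : ℝ) ^ ρ) := by
        rw [sub_eq_neg_add, Real.rpow_add hn']; ring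
    _ ≤ (n : ℝ) ^ (-α) * g n := by gcongr; exact hg n

section Fourier

variable {n : ℕ}

lemma walsh_eq_prod_univ (S : Finset (Fin n)) (ω : Fin n → Bool) :
    walsh S ω = ∏ i, if i ∈ S then (if ω i then -1 else 1) else 1 := by
  rw [walsh, prod_ite_mem, univ_inter]

lemma sum_walsh_mul_walsh (ω ω' : Fin n → Bool) :
    ∑ S : Finset (Fin n), walsh S ω * walsh S ω' = if ω = ω' then 2 ^ n else 0 := by
  have hprod : ∀ S : Finset (Fin n), walsh S ω * walsh S ω' =
      (∏ i ∈ S, (if ω i then -1 else 1) * (if ω' i then -1 else 1)) * ∏ i ∈ Sᶜ, (1 : ℝ) := by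
    intro S
    rw [walsh, walsh, prod_mul_distrib, prod_const_one, mul_one]
  have hfactor : ∀ i, ((if ω i then -1 else 1) * (if ω' i then -1 else 1) + 1 : ℝ) =
      if ω i = ω' i then 2 else 0 := by
    intro i
    cases ω i <;> cases ω' i <;> norm_num
  simp_rw [hprod, ← Fintype.prod_add, hfactor, prod_ite_zero, prod_const, card_univ,
    Fintype.card_fin]
  simp [funext_iff]

lemma sum_walshCoeff_mul_walsh (f : (Fin n → Bool) → ℝ) (ω : Fin n → Bool) :
    ∑ S, walshCoeff f S * walsh S ω = f ω := by
  simp_rw [walshCoeff, _root_.expect, div_mul_eq_mul_div, sum_mul, ← sum_div]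
  rw [sum_comm]
  simp_rw [mul_assoc, ← mul_sum, sum_walsh_mul_walsh, mul_ite, mul_zero, sum_ite_eq',
    if_pos (mem_univ _)]
  field_simp

lemma expect_mul_sum_walsh (f : (Fin n → Bool) → ℝ) (a : Finset (Fin n) → ℝ) :
    expect (fun ω => f ω * ∑ S, a S * walsh S ω) = ∑ S, a S * walshCoeff f S := by
  simp_rw [walshCoeff, _root_.expect, mul_sum, mul_div_assoc', ← sum_div, mul_sum]
  rw [sum_comm]
  congr 1
  refine sum_congr rfl fun S _ => sum_congr rfl fun ω _ => by ring

lemma sum_walshCoeff_sq (f : (Fin n → Bool) → ℝ) :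
    ∑ S, walshCoeff f S ^ 2 = expect (fun ω => f ω ^ 2) := by
  simp_rw [sq]
  conv_rhs => enter [1, ω, 2]; rw [← sum_walshCoeff_mul_walsh f ω]
  rw [expect_mul_sum_walsh]

lemma sum_walshCoeff_sq_eq_one {f : (Fin n → Bool) → ℝ} (hf : ∀ ω, f ω = 1 ∨ f ω = -1) :
    ∑ S, walshCoeff f S ^ 2 = 1 := by
  have hsq : ∀ ω, f ω ^ 2 = 1 := fun ω => by rcases hf ω with h | h <;> simp [h]
  simp [sum_walshCoeff_sq, _root_.expect, hsq]

lemma walshCoeff_empty (f : (Fin n → Bool) → ℝ) : walshCoeff f ∅ = expect f := by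
  simp [walshCoeff, walsh]

lemma sum_noiseKernel_mul_walsh (ε : ℝ) (S : Finset (Fin n)) (ω : Fin n → Bool) :
    ∑ ω', noiseKernel ε ω ω' * walsh S ω' = (1 - ε) ^ S.card * walsh S ω := by
  have hfactor : ∀ i, ∑ b : Bool, (if ω i = b then 1 - ε / 2 else ε / 2) *
      (if i ∈ S then (if b then -1 else 1) else 1) =
      (if i ∈ S then 1 - ε else 1) * (if i ∈ S then (if ω i then -1 else 1) else 1) := by
    intro i
    by_cases hi : i ∈ S <;> cases ω i <;> simp [hi] <;> ring
  simp_rw [noiseKernel, walsh_eq_prod_univ, ← prod_mul_distrib]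
  rw [← Fintype.prod_sum (fun i b => (if ω i = b then 1 - ε / 2 else ε / 2) *
      (if i ∈ S then (if b then -1 else 1) else 1))]
  simp_rw [hfactor, prod_mul_distrib, prod_ite_mem, univ_inter, prod_const]

lemma sum_noiseKernel_mul (ε : ℝ) (g : (Fin n → Bool) → ℝ) (ω : Fin n → Bool) :
    ∑ ω', noiseKernel ε ω ω' * g ω' = ∑ S, (1 - ε) ^ S.card * walshCoeff g S * walsh S ω := by
  conv_lhs => enter [2, ω']; rw [← sum_walshCoeff_mul_walsh g ω', mul_sum]
  rw [sum_comm]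
  refine sum_congr rfl fun S _ => ?_
  simp_rw [mul_left_comm (noiseKernel ε ω _), ← mul_sum, sum_noiseKernel_mul_walsh]
  ring

lemma noiseE_eq_sum_walshCoeff (ε : ℝ) (f g : (Fin n → Bool) → ℝ) :
    noiseE ε f g = ∑ S, (1 - ε) ^ S.card * walshCoeff f S * walshCoeff g S := by
  have hinner : ∀ ω, ∑ ω', noiseKernel ε ω ω' * f ω * g ω' =
      f ω * ∑ S, (1 - ε) ^ S.card * walshCoeff g S * walsh S ω := by
    intro ω
    rw [← sum_noiseKernel_mul, mul_sum]
    exact sum_congr rfl fun ω' _ => by ring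
  simp_rw [noiseE, hinner]
  exact (expect_mul_sum_walsh f _).trans (sum_congr rfl fun S _ => mul_right_comm _ _ _)

lemma noiseE_self_sub_expect_sq (ε : ℝ) (f : (Fin n → Bool) → ℝ) :
    noiseE ε f f - expect f ^ 2 =
      ∑ S, if S ≠ ∅ then (1 - ε) ^ S.card * walshCoeff f S ^ 2 else 0 := by
  rw [noiseE_eq_sum_walshCoeff, ← walshCoeff_empty, ← add_sum_erase _ _ (mem_univ ∅),
    ← add_sum_erase _ _ (mem_univ ∅)]
  simp only [card_empty, pow_zero, one_mul, ne_eq, not_true_eq_false, if_false, sq]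
  rw [add_sub_cancel_left, zero_add]
  exact sum_congr rfl fun S hS => by rw [if_pos (ne_of_mem_erase hS), mul_assoc]

lemma noiseE_self_sub_expect_sq_nonneg {ε : ℝ} (hε : ε ≤ 1) (f : (Fin n → Bool) → ℝ) :
    0 ≤ noiseE ε f f - expect f ^ 2 := by
  have hbase : 0 ≤ 1 - ε := sub_nonneg.2 hε
  rw [noiseE_self_sub_expect_sq]
  exact sum_nonneg fun S _ => by split_ifs <;> positivity

/-- The mass `P(S_f ≠ ∅, |S_f| < t)` of the spectral sample `S_f` of `f` below `t`. -/
noncomputable def spectralLowerTail (f : (Fin n → Bool) → ℝ) (t : ℝ) : ℝ :=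
  ∑ S, if S ≠ ∅ ∧ (S.card : ℝ) < t then walshCoeff f S ^ 2 else 0

lemma noiseE_self_sub_expect_sq_le (f : (Fin n → Bool) → ℝ) {ε : ℝ} (t : ℝ)
    (hε0 : 0 ≤ ε) (hε1 : ε ≤ 1) :
    noiseE ε f f - expect f ^ 2 ≤
      spectralLowerTail f t + Real.exp (-(ε * t)) * ∑ S, walshCoeff f S ^ 2 := by
  rw [noiseE_self_sub_expect_sq, spectralLowerTail, mul_sum, ← sum_add_distrib]
  refine sum_le_sum fun S _ => ?_
  have hsq : 0 ≤ walshCoeff f S ^ 2 := sq_nonneg _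
  by_cases hS : S = ∅
  · simp only [hS, ne_eq, not_true_eq_false, false_and, if_false, zero_add]
    positivity
  by_cases ht : (S.card : ℝ) < t
  · rw [if_pos hS, if_pos ⟨hS, ht⟩]
    have hpow : (1 - ε) ^ S.card ≤ 1 := pow_le_one₀ (sub_nonneg.2 hε1) (by linarith)
    have hexp : 0 ≤ Real.exp (-(ε * t)) * walshCoeff f S ^ 2 := by positivity
    linarith [mul_le_mul_of_nonneg_right hpow hsq]
  · rw [if_pos hS, if_neg (fun h => ht h.2), zero_add]
    exact mul_le_mul_of_nonneg_right (one_sub_pow_le_exp_neg_mul hε0 hε1 (not_lt.1 ht)) hsq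

end Fourier

theorem spectral_tightness_implies_sensitivity_general
    {m : ℕ → ℕ} (f : ∀ n, (Fin (m n) → Bool) → ℝ)
    (hb : ∀ n ω, f n ω = 1 ∨ f n ω = -1)
    (c ρ : ℝ) (hc : 0 < c)
    (hI : ∀ n : ℕ, c * (n : ℝ) ^ ρ ≤ totalInfluence (f n))
    (htight : ∀ γ : ℝ, 0 < γ → ∃ δ : ℝ, 0 < δ ∧ ∀ n : ℕ,
      (∑ S : Finset (Fin (m n)),
        if S ≠ ∅ ∧ (S.card : ℝ) < δ * totalInfluence (f n)
        then walshCoeff (f n) S ^ 2 else 0) < γ)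
    (α : ℝ) (hα0 : 0 < α) (hα : α < ρ) :
    Filter.Tendsto
      (fun n : ℕ => noiseE ((n : ℝ) ^ (-α)) (f n) (f n) - expect (f n) ^ 2)
      Filter.atTop (nhds 0) := by
  have hε : ∀ n : ℕ, 1 ≤ n → 0 ≤ (n : ℝ) ^ (-α) ∧ (n : ℝ) ^ (-α) ≤ 1 := fun n hn =>
    ⟨by positivity, Real.rpow_le_one_of_one_le_of_nonpos (by exact_mod_cast hn) (by linarith)⟩
  refine tendsto_order.2 ⟨fun a ha => ?_, fun γ hγ => ?_⟩
  · filter_upwards [eventually_ge_atTop 1] with n hn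
    exact ha.trans_le (noiseE_self_sub_expect_sq_nonneg (hε n hn).2 _)
  obtain ⟨δ, hδ, htail⟩ := htight (γ / 2) (half_pos hγ)
  have hdecay : Tendsto (fun n : ℕ => Real.exp (-((n : ℝ) ^ (-α) * (δ * totalInfluence (f n)))))
      atTop (𝓝 0) :=
    Real.tendsto_exp_atBot.comp <| tendsto_neg_atTop_atBot.comp <|
      tendsto_natCast_rpow_neg_mul_atTop (mul_pos hδ hc) hα fun n => by
        rw [mul_assoc]; exact mul_le_mul_of_nonneg_left (hI n) hδ.le
  filter_upwards [eventually_ge_atTop 1, hdecay.eventually (gt_mem_nhds (half_pos hγ))]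
    with n hn hsmall
  calc _ ≤ spectralLowerTail (f n) (δ * totalInfluence (f n)) +
        Real.exp (-((n : ℝ) ^ (-α) * (δ * totalInfluence (f n)))) * 1 := by
        rw [← sum_walshCoeff_sq_eq_one (hb n)]
        exact noiseE_self_sub_expect_sq_le _ _ (hε n hn).1 (hε n hn).2
    _ < γ / 2 + γ / 2 := by rw [mul_one]; exact add_lt_add (htail n) hsmall
    _ = γ := add_halves γ

/-- If I(f_n) ≥ c n^ρ and the spectral samples have uniformly small lower tails
(below any small multiple of their means), then for every 0 < α < ρ and
ε_n = n^{-α} the noise covariance tends to 0 (so SENS({f_n}) ≥ ρ). -/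
theorem spectral_tightness_implies_sensitivity
    {m : ℕ → ℕ} (f : ∀ n, (Fin (m n) → Bool) → ℝ)
    (hb : ∀ n ω, f n ω = 1 ∨ f n ω = -1)
    (c ρ : ℝ) (hc : 0 < c) (hρ : 0 < ρ)
    (hI : ∀ n : ℕ, c * (n : ℝ) ^ ρ ≤ totalInfluence (f n))
    (htight : ∀ γ : ℝ, 0 < γ → ∃ δ : ℝ, 0 < δ ∧ ∀ n : ℕ,
      (∑ S : Finset (Fin (m n)),
        if S ≠ ∅ ∧ (S.card : ℝ) < δ * totalInfluence (f n)
        then walshCoeff (f n) S ^ 2 else 0) < γ)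
    (α : ℝ) (hα0 : 0 < α) (hα : α < ρ) :
    Filter.Tendsto
      (fun n : ℕ => noiseE ((n : ℝ) ^ (-α)) (f n) (f n) - expect (f n) ^ 2)
      Filter.atTop (nhds 0) :=
  spectral_tightness_implies_sensitivity_general f hb c ρ hc hI htight α hα0 hα
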